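/- arXiv:1212.5505 — 2 statements merged into one kernel-verified Lean document; each statement's English description precedes it below -/
import Mathlib

section
/- Upper bound on the decomposition weights in random environment. Under the assumptions sup_i ∑_j |W_{j→i}| < ∞, uniform Lipschitz continuity of φ with constant γ, φ_i ≥ δ > 0 and G(n) < ∞ for all n, for every (i,t) with ξ_t(i) = 0 and every k ≥ 1: λ_{(i,t)}(k) ≤ γ ∑_{j∉V_i(k−1)} |W_{j→i}| ∑_{s=R_t^i}^{t−1} g_j(t−s)(1 − ξ_s(j)) ≤ γ · G(t − R_t^i) · ∑_{j∉V_i(k−1)} |W_{j→i}|. -/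
/-!
Since `i ∈ V_i(m)`, every configuration competing in `r^{[m]}(·|x)` shares with `x` the last
spike `L ≥ R_t^i` of `i` before `t`. Given competitors `z₁` for `r^{[m]}(1|x)` and `z₂` for
`r^{[m]}(0|x)`, the configuration `z₃` equal to `z₁` on `V_i(m+1)` and to `z₂` elsewhere competes
in `r^{[m+1]}(0|z₁)`, so `α(m+1) ≤ p(1|z₁) + p(0|z₃)`. By the Lipschitz bound on `φ`,
`p(0|z₃) ≤ p(0|z₂) + γ |pot z₃ - pot z₂|`, and the two potentials differ only through the spikes
of neurons `j ∈ V_i(m+1) \ V_i(m)` at times `s ∈ [L, t-1]` with `ξ_s(j) = 0`. Taking infima over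
`z₁`, `z₂` and `x` bounds `λ(m+1) = α(m+1) - α(m)`; the second inequality bounds each window sum of
`g_j` by `G(t - R_t^i)`.
-/

open MeasureTheory Filter Set
open scoped ENNReal

noncomputable section

namespace NeuronSys

variable {I : Type*}

/-- The accumulated, weighted spiking activity felt by neuron `i` at time `t`:
`∑_j W_{j→i} ∑_{s = L_t^i}^{t-1} g_j(t-s) x_s(j)`, where the inner sum ranges over
those `s < t` such that neuron `i` has no spike strictly between `s` and `t`
(equivalently `L_t^i(x) ≤ s ≤ t-1`; if `i` never spiked before `t`, over all `s < t`). -/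
noncomputable def pot (W : I → I → ℝ) (g : I → ℕ → ℝ) (i : I) (t : ℤ)
    (x : ℤ → I → Bool) : ℝ :=
  ∑' (j : I) (s : ℤ),
    if s < t ∧ (∀ u : ℤ, s < u → u < t → x u i = false) ∧ x s j = true
    then W j i * g j (t - s).toNat else 0

/-- The last spike time `L_t^i(x) = sup {s < t : x_s(i) = 1}` (junk value if no spike). -/
noncomputable def lastSpike (x : ℤ → I → Bool) (i : I) (t : ℤ) : ℤ :=
  sSup {s : ℤ | s < t ∧ x s i = true}

/-- The spiking probability of neuron `i` at time `t` given the past `x`, for a spiking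
rate `φ_i(s, n)` depending also on the time `n = t - L_t^i` elapsed since the last spike. -/
noncomputable def spikeP (φ : I → ℝ → ℕ → ℝ) (W : I → I → ℝ) (g : I → ℕ → ℝ)
    (i : I) (t : ℤ) (x : ℤ → I → Bool) : ℝ :=
  φ i (pot W g i t x) (t - lastSpike x i t).toNat

/-- The filtration `F_t = σ(X_s(j) : j ∈ I, s ≤ t)` on `{0,1}^{I × ℤ}`. -/
def filt (I : Type*) (t : ℤ) : MeasurableSpace (ℤ → I → Bool) :=
  MeasurableSpace.comap (fun x (p : {s : ℤ // s ≤ t} × I) => x p.1.1 p.2)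
    MeasurableSpace.pi

/-- `P` is compatible with the dynamics: conditionally on `F_{t-1}` the coordinates
`(X_t(i))_{i∈I}` are independent, with `P(X_t(i) = 1 | F_{t-1}) = φ_i(potential, t - L_t^i)`. -/
def Compatible (φ : I → ℝ → ℕ → ℝ) (W : I → I → ℝ) (g : I → ℕ → ℝ)
    (P : Measure (ℤ → I → Bool)) : Prop :=
  ∀ (t : ℤ) (J : Finset I) (a : I → Bool),
    (P[(fun x => ∏ i ∈ J, (if x t i = a i then (1:ℝ) else 0)) | filt I (t-1)])
      =ᵐ[P] (fun x => ∏ i ∈ J,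
        (if a i then spikeP φ W g i t x else 1 - spikeP φ W g i t x))

/-- `G(n) = sup_i ∑_{m=1}^n g_i(m)`, as an extended real. -/
noncomputable def Gfun (g : I → ℕ → ℝ) (n : ℕ) : ℝ≥0∞ :=
  ⨆ i : I, ∑ m ∈ Finset.Icc 1 n, ENNReal.ofReal (g i m)

end NeuronSys

namespace NeuronSys

variable {I : Type*}

/-- Spiking probability when the rate `φ_i(s)` does not depend on the elapsed time. -/
noncomputable def spikePS (φ : I → ℝ → ℝ) (W : I → I → ℝ) (g : I → ℕ → ℝ)
    (i : I) (t : ℤ) (x : ℤ → I → Bool) : ℝ :=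
  φ i (pot W g i t x)

/-- Compatibility of `P` with the dynamics when `φ_i(s)` does not depend on
the elapsed time since the last spike. -/
def CompatibleS (φ : I → ℝ → ℝ) (W : I → I → ℝ) (g : I → ℕ → ℝ)
    (P : Measure (ℤ → I → Bool)) : Prop :=
  ∀ (t : ℤ) (J : Finset I) (a : I → Bool),
    (P[(fun x => ∏ i ∈ J, (if x t i = a i then (1:ℝ) else 0)) | filt I (t-1)])
      =ᵐ[P] (fun x => ∏ i ∈ J,
        (if a i then spikePS φ W g i t x else 1 - spikePS φ W g i t x))

end NeuronSys

namespace NeuronSys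

variable {I : Type*}

/-- The set `S^ξ` of configurations compatible with the spontaneous spikes `ξ`. -/
def Sxi (ξ : ℤ → I → Bool) : Set (ℤ → I → Bool) := {x | ∀ i t, ξ t i = true → x t i = true}

/-- `R_t^i = sup {s < t : ξ_s(i) = 1}`, the last spontaneous spike time before `t`. -/
noncomputable def lastXi (ξ : ℤ → I → Bool) (i : I) (t : ℤ) : ℤ :=
  sSup {s : ℤ | s < t ∧ ξ s i = true}

/-- `p_{(i,t)}(a|x)`: probability that neuron `i` takes value `a` at time `t` given
the past configuration `x`. -/
noncomputable def pcond (φ : I → ℝ → ℕ → ℝ) (W : I → I → ℝ) (g : I → ℕ → ℝ)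
    (i : I) (t : ℤ) (a : Bool) (x : ℤ → I → Bool) : ℝ :=
  if a then spikeP φ W g i t x else 1 - spikeP φ W g i t x

/-- `r_{(i,t)}^{[-1]}(a) = inf {p_{(i,t)}(a|z) : z ∈ S^ξ}`. -/
noncomputable def rneg (φ : I → ℝ → ℕ → ℝ) (W : I → I → ℝ) (g : I → ℕ → ℝ)
    (ξ : ℤ → I → Bool) (i : I) (t : ℤ) (a : Bool) : ℝ :=
  sInf ((fun z => pcond φ W g i t a z) '' Sxi ξ)

/-- `r_{(i,t)}^{[k]}(a|x) = inf {p_{(i,t)}(a|z) : z ∈ S^ξ, z = x on V_i(k) × [L_t^i(x), t-1]}`. -/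
noncomputable def rk (φ : I → ℝ → ℕ → ℝ) (W : I → I → ℝ) (g : I → ℕ → ℝ)
    (ξ : ℤ → I → Bool) (V : I → ℕ → Finset I)
    (i : I) (t : ℤ) (k : ℕ) (a : Bool) (x : ℤ → I → Bool) : ℝ :=
  sInf {v | ∃ z ∈ Sxi ξ,
    (∀ j ∈ V i k, ∀ s : ℤ, lastSpike x i t ≤ s → s < t → z s j = x s j) ∧
    v = pcond φ W g i t a z}

/-- `λ_{(i,t)}(-1) = α_{(i,t)}(-1) = r^{[-1]}(1) + r^{[-1]}(0)`. -/
noncomputable def lamNeg (φ : I → ℝ → ℕ → ℝ) (W : I → I → ℝ) (g : I → ℕ → ℝ)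
    (ξ : ℤ → I → Bool) (i : I) (t : ℤ) : ℝ :=
  rneg φ W g ξ i t true + rneg φ W g ξ i t false

/-- `α_{(i,t)}(k) = inf_{x ∈ S^ξ} (r^{[k]}(1|x) + r^{[k]}(0|x))`. -/
noncomputable def alp (φ : I → ℝ → ℕ → ℝ) (W : I → I → ℝ) (g : I → ℕ → ℝ)
    (ξ : ℤ → I → Bool) (V : I → ℕ → Finset I) (i : I) (t : ℤ) (k : ℕ) : ℝ :=
  sInf ((fun x => rk φ W g ξ V i t k true x + rk φ W g ξ V i t k false x) '' Sxi ξ)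

/-- `λ_{(i,t)}(k) = α_{(i,t)}(k) - α_{(i,t)}(k-1)` for `k ≥ 0`. -/
noncomputable def lam (φ : I → ℝ → ℕ → ℝ) (W : I → I → ℝ) (g : I → ℕ → ℝ)
    (ξ : ℤ → I → Bool) (V : I → ℕ → Finset I) (i : I) (t : ℤ) : ℕ → ℝ
  | 0 => alp φ W g ξ V i t 0 - lamNeg φ W g ξ i t
  | k + 1 => alp φ W g ξ V i t (k + 1) - alp φ W g ξ V i t k

end NeuronSys

/-- No summability is needed: the two series are summable or not together. -/
lemma abs_tsum_sub_tsum_le {ι : Type*} {f f' : ι → ℝ} (E : Finset ι)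
    (hff' : ∀ j ∉ E, f j = f' j) : |∑' j, f j - ∑' j, f' j| ≤ ∑ j ∈ E, |f j - f' j| := by
  have hcof : f =ᶠ[Filter.cofinite] f' :=
    Filter.eventually_cofinite.2 <| E.finite_toSet.subset fun j hj =>
      by_contra fun hjE => hj (hff' j hjE)
  by_cases hf : Summable f
  · rw [← hf.tsum_sub (hf.congr_cofinite hcof),
      tsum_eq_sum fun j hj => sub_eq_zero.2 (hff' j hj)]
    exact Finset.abs_sum_le_sum_abs _ _
  · have hf' : ¬Summable f' := fun h => hf (h.congr_cofinite hcof.symm)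
    simp only [tsum_eq_zero_of_not_summable hf, tsum_eq_zero_of_not_summable hf', sub_zero,
      abs_zero]
    positivity

namespace NeuronSys

variable {I : Type*}

section LastSpike

def IsLastSpike (x : ℤ → I → Bool) (i : I) (t L : ℤ) : Prop :=
  L < t ∧ x L i = true ∧ ∀ u, L < u → u < t → x u i = false

variable {x z : ℤ → I → Bool} {i : I} {t L : ℤ}

lemma IsLastSpike.lastSpike_eq (h : IsLastSpike x i t L) : lastSpike x i t = L := by
  obtain ⟨hLt, hL, hgap⟩ := h
  refine le_antisymm (csSup_le ⟨L, hLt, hL⟩ fun s ⟨hst, hs⟩ => ?_)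
    (le_csSup ⟨t, fun s hs => hs.1.le⟩ ⟨hLt, hL⟩)
  by_contra! hLs
  simp [hgap s hLs hst] at hs

lemma isLastSpike_lastSpike (h : ∃ s < t, x s i = true) :
    IsLastSpike x i t (lastSpike x i t) := by
  have hbdd : BddAbove {s : ℤ | s < t ∧ x s i = true} := ⟨t, fun s hs => hs.1.le⟩
  obtain ⟨hLt, hL⟩ : lastSpike x i t ∈ {s : ℤ | s < t ∧ x s i = true} := Int.csSup_mem h hbdd
  refine ⟨hLt, hL, fun u hu hut => ?_⟩
  by_contra hxu
  exact (le_csSup hbdd ⟨hut, by simpa using hxu⟩).not_gt hu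

lemma IsLastSpike.congr (h : IsLastSpike x i t L)
    (hzx : ∀ s, L ≤ s → s < t → z s i = x s i) : IsLastSpike z i t L := by
  obtain ⟨hLt, hL, hgap⟩ := h
  exact ⟨hLt, (hzx L le_rfl hLt).trans hL,
    fun u hu hut => (hzx u hu.le hut).trans (hgap u hu hut)⟩

lemma lastXi_le_lastSpike {ξ : ℤ → I → Bool} (hx : x ∈ Sxi ξ)
    (hξ : ∃ s < t, ξ s i = true) : lastXi ξ i t ≤ lastSpike x i t := by
  obtain ⟨s, hst, hs⟩ := hξ
  exact csSup_le_csSup ⟨t, fun u hu => hu.1.le⟩ ⟨s, hst, hs⟩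
    fun u ⟨hut, hu⟩ => ⟨hut, hx i u hu⟩

end LastSpike

section Potential

variable (W : I → I → ℝ) (g : I → ℕ → ℝ) (ξ : ℤ → I → Bool) (i : I) (t L : ℤ)

def windowPot (z : ℤ → I → Bool) (j : I) : ℝ :=
  ∑ s ∈ Finset.Icc L (t - 1), if z s j = true then W j i * g j (t - s).toNat else 0

def freeInput (j : I) : ℝ :=
  |W j i| * ∑ s ∈ Finset.Icc L (t - 1), g j (t - s).toNat * (if ξ s j then 0 else 1)

variable {W g ξ i t L}

lemma pot_eq_tsum_windowPot {z : ℤ → I → Bool} (h : IsLastSpike z i t L) :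
    pot W g i t z = ∑' j, windowPot W g i t L z j := by
  obtain ⟨hLt, hL, hgap⟩ := h
  refine tsum_congr fun j => tsum_eq_sum (fun s hs => if_neg ?_) |>.trans
    (Finset.sum_congr rfl fun s hs => ?_)
  · rintro ⟨hst, hgap', -⟩
    rw [Finset.mem_Icc, not_and_or, not_le] at hs
    rcases hs with hsL | hts
    · simp [hgap' L hsL hLt] at hL
    · omega
  · rw [Finset.mem_Icc] at hs
    exact if_congr ⟨fun h => h.2.2, fun h => ⟨by omega, fun u hu hut => hgap u (by omega) hut, h⟩⟩
      rfl rfl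

lemma freeInput_nonneg (hg : ∀ j n, 0 ≤ g j n) (j : I) : 0 ≤ freeInput W g ξ i t L j :=
  mul_nonneg (abs_nonneg _) (Finset.sum_nonneg fun s _ => by split_ifs <;> simp [hg])

lemma freeInput_anti {L' : ℤ} (hg : ∀ j n, 0 ≤ g j n) (hLL' : L ≤ L') (j : I) :
    freeInput W g ξ i t L' j ≤ freeInput W g ξ i t L j := by
  refine mul_le_mul_of_nonneg_left (Finset.sum_le_sum_of_subset_of_nonneg ?_
    fun s _ _ => by split_ifs <;> simp [hg]) (abs_nonneg _)
  exact Finset.Icc_subset_Icc hLL' le_rfl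

lemma sum_Icc_toNat_sub (f : ℕ → ℝ) :
    ∑ s ∈ Finset.Icc L (t - 1), f (t - s).toNat = ∑ n ∈ Finset.Icc 1 (t - L).toNat, f n := by
  refine Finset.sum_nbij' (fun s => (t - s).toNat) (fun n => t - n) ?_ ?_ ?_ ?_ fun _ _ => rfl <;>
    intro a ha <;> simp only [Finset.mem_Icc] at ha ⊢ <;> omega

lemma freeInput_le (hg : ∀ j n, 0 ≤ g j n) (j : I) :
    freeInput W g ξ i t L j ≤ |W j i| * ∑ n ∈ Finset.Icc 1 (t - L).toNat, g j n := by
  rw [freeInput, ← sum_Icc_toNat_sub]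
  exact mul_le_mul_of_nonneg_left
    (Finset.sum_le_sum fun s _ => by split_ifs <;> simp [hg]) (abs_nonneg _)

lemma abs_windowPot_sub_le (hg : ∀ j n, 0 ≤ g j n) {z z' : ℤ → I → Bool}
    (hz : z ∈ Sxi ξ) (hz' : z' ∈ Sxi ξ) (j : I) :
    |windowPot W g i t L z j - windowPot W g i t L z' j| ≤ freeInput W g ξ i t L j := by
  rw [windowPot, windowPot, ← Finset.sum_sub_distrib, freeInput, Finset.mul_sum]
  refine (Finset.abs_sum_le_sum_abs _ _).trans (Finset.sum_le_sum fun s _ => ?_)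
  by_cases hξs : ξ s j = true
  · simp [hz j s hξs, hz' j s hξs, hξs]
  · have hWg : |W j i * g j (t - s).toNat| = |W j i| * g j (t - s).toNat := by
      rw [abs_mul, abs_of_nonneg (hg _ _)]
    simp only [hξs, if_false, mul_one, Bool.false_eq_true]
    split_ifs <;> simp [hWg, mul_nonneg (abs_nonneg (W j i)) (hg j (t - s).toNat)]

lemma abs_pot_sub_le (hg : ∀ j n, 0 ≤ g j n) {z z' : ℤ → I → Bool}
    (hz : z ∈ Sxi ξ) (hz' : z' ∈ Sxi ξ)
    (hzL : IsLastSpike z i t L) (hz'L : IsLastSpike z' i t L) (E : Finset I)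
    (hzz' : ∀ j ∉ E, ∀ s, L ≤ s → s < t → z s j = z' s j) :
    |pot W g i t z - pot W g i t z'| ≤ ∑ j ∈ E, freeInput W g ξ i t L j := by
  rw [pot_eq_tsum_windowPot hzL, pot_eq_tsum_windowPot hz'L]
  refine (abs_tsum_sub_tsum_le E fun j hj => Finset.sum_congr rfl fun s hs => ?_).trans
    (Finset.sum_le_sum fun j _ => abs_windowPot_sub_le hg hz hz' j)
  rw [Finset.mem_Icc] at hs
  rw [hzz' j hj s hs.1 (by omega)]

end Potential

section Infima

variable {φ : I → ℝ → ℕ → ℝ} {W : I → I → ℝ} {g : I → ℕ → ℝ} {ξ : ℤ → I → Bool}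
  {V : I → ℕ → Finset I} {i : I} {t : ℤ} {k : ℕ} {a : Bool} {x : ℤ → I → Bool} {c : ℝ}

lemma pcond_nonneg (hφ : ∀ i s n, φ i s n ∈ Set.Icc (0 : ℝ) 1) (z : ℤ → I → Bool) :
    0 ≤ pcond φ W g i t a z := by
  obtain ⟨h0, h1⟩ := hφ i (pot W g i t z) (t - lastSpike z i t).toNat
  cases a
  · exact sub_nonneg.2 h1
  · exact h0

lemma rk_le (hφ : ∀ i s n, φ i s n ∈ Set.Icc (0 : ℝ) 1) {z : ℤ → I → Bool} (hz : z ∈ Sxi ξ)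
    (hzx : ∀ j ∈ V i k, ∀ s, lastSpike x i t ≤ s → s < t → z s j = x s j) :
    rk φ W g ξ V i t k a x ≤ pcond φ W g i t a z :=
  csInf_le ⟨0, fun _ ⟨y, _, _, hv⟩ => hv ▸ pcond_nonneg hφ y⟩ ⟨z, hz, hzx, rfl⟩

lemma le_rk (hx : x ∈ Sxi ξ)
    (h : ∀ z ∈ Sxi ξ, (∀ j ∈ V i k, ∀ s, lastSpike x i t ≤ s → s < t → z s j = x s j) →
      c ≤ pcond φ W g i t a z) :
    c ≤ rk φ W g ξ V i t k a x :=
  le_csInf ⟨_, x, hx, fun _ _ _ _ _ => rfl, rfl⟩ fun _ ⟨z, hz, hzx, hv⟩ => hv ▸ h z hz hzx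

lemma rk_nonneg (hφ : ∀ i s n, φ i s n ∈ Set.Icc (0 : ℝ) 1) (hx : x ∈ Sxi ξ) :
    0 ≤ rk φ W g ξ V i t k a x :=
  le_rk hx fun z _ _ => pcond_nonneg hφ z

lemma alp_le (hφ : ∀ i s n, φ i s n ∈ Set.Icc (0 : ℝ) 1) (hx : x ∈ Sxi ξ) :
    alp φ W g ξ V i t k ≤ rk φ W g ξ V i t k true x + rk φ W g ξ V i t k false x :=
  csInf_le ⟨0, fun _ ⟨_, hy, hv⟩ => hv ▸ add_nonneg (rk_nonneg hφ hy) (rk_nonneg hφ hy)⟩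
    ⟨x, hx, rfl⟩

lemma le_alp (h : ∀ x ∈ Sxi ξ, c ≤ rk φ W g ξ V i t k true x + rk φ W g ξ V i t k false x) :
    c ≤ alp φ W g ξ V i t k :=
  le_csInf ⟨_, ξ, fun _ _ h => h, rfl⟩ fun _ ⟨x, hx, hv⟩ => hv ▸ h x hx

end Infima

section Step

variable {φ : I → ℝ → ℕ → ℝ} {W : I → I → ℝ} {g : I → ℕ → ℝ}
  {ξ : ℤ → I → Bool} {V : I → ℕ → Finset I} {γ : ℝ} {i : I} {t L : ℤ} {m : ℕ}

lemma abs_spikeP_sub_le (hφLip : ∀ i s s' n, |φ i s n - φ i s' n| ≤ γ * |s - s'|)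
    {z z' : ℤ → I → Bool} (hzL : IsLastSpike z i t L) (hz'L : IsLastSpike z' i t L) :
    |spikeP φ W g i t z - spikeP φ W g i t z'| ≤ γ * |pot W g i t z - pot W g i t z'| := by
  rw [spikeP, spikeP, hzL.lastSpike_eq, hz'L.lastSpike_eq]
  exact hφLip _ _ _ _

variable [DecidableEq I]

lemma alp_succ_le_pcond_add (hg : ∀ j n, 0 ≤ g j n) (hγ : 0 ≤ γ)
    (hφ : ∀ i s n, φ i s n ∈ Set.Icc (0 : ℝ) 1)
    (hφLip : ∀ i s s' n, |φ i s n - φ i s' n| ≤ γ * |s - s'|)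
    (hi : i ∈ V i m) (hV : V i m ⊆ V i (m + 1))
    {x : ℤ → I → Bool} (hxL : IsLastSpike x i t L) (hRL : lastXi ξ i t ≤ L)
    {z₁ z₂ : ℤ → I → Bool} (hz₁ : z₁ ∈ Sxi ξ) (hz₂ : z₂ ∈ Sxi ξ)
    (hz₁x : ∀ j ∈ V i m, ∀ s, L ≤ s → s < t → z₁ s j = x s j)
    (hz₂x : ∀ j ∈ V i m, ∀ s, L ≤ s → s < t → z₂ s j = x s j) :
    alp φ W g ξ V i t (m + 1) ≤ pcond φ W g i t true z₁ + pcond φ W g i t false z₂ +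
      γ * ∑ j ∈ V i (m + 1) \ V i m, freeInput W g ξ i t (lastXi ξ i t) j := by
  set z₃ : ℤ → I → Bool := fun s j => if j ∈ V i (m + 1) then z₁ s j else z₂ s j
  have hz₃ : z₃ ∈ Sxi ξ := fun j s h => by
    by_cases hj : j ∈ V i (m + 1) <;> simp [z₃, hj, hz₁ j s h, hz₂ j s h]
  have hz₁L : IsLastSpike z₁ i t L := hxL.congr (hz₁x i hi)
  have hz₂L : IsLastSpike z₂ i t L := hxL.congr (hz₂x i hi)
  have hz₃L : IsLastSpike z₃ i t L := hz₁L.congr fun s _ _ => if_pos (hV hi)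
  have hpot : |pot W g i t z₃ - pot W g i t z₂| ≤
      ∑ j ∈ V i (m + 1) \ V i m, freeInput W g ξ i t (lastXi ξ i t) j := by
    refine (abs_pot_sub_le hg hz₃ hz₂ hz₃L hz₂L _ fun j hj s hLs hst => ?_).trans
      (Finset.sum_le_sum fun j _ => freeInput_anti hg hRL j)
    by_cases hjm : j ∈ V i (m + 1)
    · have hj : j ∈ V i m := by simpa [hjm] using hj
      simp [z₃, hjm, hz₁x j hj s hLs hst, hz₂x j hj s hLs hst]
    · simp [z₃, hjm]
  have hspike := (le_abs_self _).trans (abs_spikeP_sub_le (W := W) (g := g) hφLip hz₂L hz₃L)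
  rw [abs_sub_comm] at hspike
  calc alp φ W g ξ V i t (m + 1)
      ≤ rk φ W g ξ V i t (m + 1) true z₁ + rk φ W g ξ V i t (m + 1) false z₁ := alp_le hφ hz₁
    _ ≤ pcond φ W g i t true z₁ + pcond φ W g i t false z₃ :=
      add_le_add (rk_le hφ hz₁ fun _ _ _ _ _ => rfl) (rk_le hφ hz₃ fun _ hj _ _ _ => if_pos hj)
    _ ≤ _ := by
      simp only [pcond, if_true, Bool.false_eq_true, if_false]
      linarith [mul_le_mul_of_nonneg_left hpot hγ]

theorem alp_succ_le (hg : ∀ j n, 0 ≤ g j n) (hγ : 0 ≤ γ)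
    (hφ : ∀ i s n, φ i s n ∈ Set.Icc (0 : ℝ) 1)
    (hφLip : ∀ i s s' n, |φ i s n - φ i s' n| ≤ γ * |s - s'|)
    (hi : i ∈ V i m) (hV : V i m ⊆ V i (m + 1)) (hξ : ∃ s < t, ξ s i = true) :
    alp φ W g ξ V i t (m + 1) ≤ alp φ W g ξ V i t m +
      γ * ∑ j ∈ V i (m + 1) \ V i m, freeInput W g ξ i t (lastXi ξ i t) j := by
  rw [← sub_le_iff_le_add]
  refine le_alp fun x hx => ?_
  obtain ⟨s, hst, hs⟩ := hξ
  have hxL := isLastSpike_lastSpike ⟨s, hst, hx i s hs⟩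
  have hRL := lastXi_le_lastSpike hx ⟨s, hst, hs⟩
  refine sub_le_iff_le_add.1 (le_rk hx fun z₁ hz₁ hz₁x => sub_le_comm.1 (le_rk hx
    fun z₂ hz₂ hz₂x => ?_))
  have := alp_succ_le_pcond_add (W := W) hg hγ hφ hφLip hi hV hxL hRL hz₁ hz₂ hz₁x hz₂x
  linarith

end Step

lemma summable_abs_of_iSup_tsum_lt_top {W : I → I → ℝ}
    (hW : (⨆ i : I, ∑' j : I, ENNReal.ofReal |W j i|) < ⊤) (i : I) :
    Summable fun j => |W j i| := by
  have hi : ∑' j, ENNReal.ofReal |W j i| ≠ ⊤ :=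
    ((le_iSup (fun i => ∑' j, ENNReal.ofReal |W j i|) i).trans_lt hW).ne
  exact (ENNReal.summable_toReal hi).congr fun j => ENNReal.toReal_ofReal (abs_nonneg _)

lemma bddAbove_range_sum_Icc {g : I → ℕ → ℝ} (hg : ∀ j n, 0 ≤ g j n) {n : ℕ}
    (hG : Gfun g n < ⊤) : BddAbove (Set.range fun j => ∑ m ∈ Finset.Icc 1 n, g j m) := by
  refine ⟨(Gfun g n).toReal, ?_⟩
  rintro _ ⟨j, rfl⟩
  refine (ENNReal.ofReal_le_iff_le_toReal hG.ne).1 ?_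
  rw [ENNReal.ofReal_sum_of_nonneg fun m _ => hg j m]
  exact le_iSup (fun j => ∑ m ∈ Finset.Icc 1 n, ENNReal.ofReal (g j m)) j

end NeuronSys

open NeuronSys

theorem lam_upper_bound_random_environment_general
    {I : Type*} [DecidableEq I]
    (W : I → I → ℝ) (g : I → ℕ → ℝ) (V : I → ℕ → Finset I)
    (γ : ℝ) (φ : I → ℝ → ℕ → ℝ) (ξ : ℤ → I → Bool)
    (hgpos : ∀ j n, 0 ≤ g j n)
    (hγ : 0 < γ)
    (hWsum : (⨆ i : I, ∑' j : I, ENNReal.ofReal |W j i|) < ⊤)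
    (hV0 : ∀ i, V i 0 = {i})
    (hVmono : ∀ i, Monotone (V i))
    (hφrange : ∀ i s n, φ i s n ∈ Set.Icc (0:ℝ) 1)
    (hφLip : ∀ i s s' n, |φ i s n - φ i s' n| ≤ γ * |s - s'|)
    (hG : ∀ n, Gfun g n < ⊤)
    (hξ : ∀ (i : I) (t : ℤ), ∃ s : ℤ, s < t ∧ ξ s i = true)
    (i : I) (t : ℤ)
    (k : ℕ) (hk : 1 ≤ k) :
    lam φ W g ξ V i t k
      ≤ γ * ∑' j : I, (if j ∈ V i (k-1) then 0 else
          |W j i| * ∑ s ∈ Finset.Icc (lastXi ξ i t) (t-1),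
            g j (t - s).toNat * (if ξ s j then 0 else 1)) ∧
    γ * (∑' j : I, (if j ∈ V i (k-1) then 0 else
          |W j i| * ∑ s ∈ Finset.Icc (lastXi ξ i t) (t-1),
            g j (t - s).toNat * (if ξ s j then 0 else 1)))
      ≤ γ * (⨆ j : I, ∑ m ∈ Finset.Icc 1 (t - lastXi ξ i t).toNat, g j m)
          * ∑' j : I, (if j ∈ V i (k-1) then 0 else |W j i|) := by
  obtain ⟨m, rfl⟩ : ∃ m, k = m + 1 := ⟨k - 1, by omega⟩
  rw [Nat.add_sub_cancel]
  set R := lastXi ξ i t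
  set C := ⨆ j, ∑ n ∈ Finset.Icc 1 (t - R).toNat, g j n
  let D : I → ℝ := fun j => if j ∈ V i m then 0 else freeInput W g ξ i t R j
  let H : I → ℝ := fun j => if j ∈ V i m then 0 else |W j i|
  have hD0 (j : I) : 0 ≤ D j := by
    by_cases hj : j ∈ V i m <;> simp [D, hj, freeInput_nonneg hgpos]
  have hDH (j : I) : D j ≤ H j * C := by
    by_cases hj : j ∈ V i m
    · simp [D, H, hj]
    · simpa [D, H, hj] using (freeInput_le hgpos j).trans (mul_le_mul_of_nonneg_left
        (le_ciSup (bddAbove_range_sum_Icc hgpos (hG _)) j) (abs_nonneg _))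
  have hH : Summable H := (summable_abs_of_iSup_tsum_lt_top hWsum i).of_nonneg_of_le
    (fun j => by dsimp only [H]; split_ifs <;> simp) (fun j => by dsimp only [H]; split_ifs <;> simp)
  have hD : Summable D := (hH.mul_right C).of_nonneg_of_le hD0 hDH
  constructor
  · have hstep := alp_succ_le (W := W) hgpos hγ.le hφrange hφLip
      (hVmono i m.zero_le (by simp [hV0])) (hVmono i m.le_succ) (hξ i t)
    have hsum : ∑ j ∈ V i (m + 1) \ V i m, freeInput W g ξ i t R j ≤ ∑' j, D j :=
      le_of_eq_of_le (Finset.sum_congr rfl fun j hj => by simp [D, (Finset.mem_sdiff.1 hj).2])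
        (hD.sum_le_tsum _ fun j _ => hD0 j)
    change alp φ W g ξ V i t (m + 1) - alp φ W g ξ V i t m ≤ γ * ∑' j, D j
    linarith [mul_le_mul_of_nonneg_left hsum hγ.le]
  · change γ * ∑' j, D j ≤ γ * C * ∑' j, H j
    rw [mul_assoc, mul_comm C, ← tsum_mul_right]
    exact mul_le_mul_of_nonneg_left (hD.tsum_le_tsum hDH (hH.mul_right C)) hγ.le

/-- **Upper bound on the decomposition weights in random environment.** For `k ≥ 1`,
`λ_{(i,t)}(k) ≤ γ ∑_{j∉V_i(k-1)} |W_{j→i}| ∑_{s=R_t^i}^{t-1} g_j(t-s)(1-ξ_s(j))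
 ≤ γ G(t-R_t^i) ∑_{j∉V_i(k-1)} |W_{j→i}|`. -/
theorem lam_upper_bound_random_environment
    {I : Type*} [Countable I] [Nonempty I] [DecidableEq I]
    (W : I → I → ℝ) (g : I → ℕ → ℝ) (V : I → ℕ → Finset I)
    (γ δ : ℝ) (φ : I → ℝ → ℕ → ℝ) (ξ : ℤ → I → Bool)
    (hWdiag : ∀ j, W j j = 0)
    (hgpos : ∀ j n, 0 ≤ g j n)
    (hγ : 0 < γ) (hδ : 0 < δ)
    (hWsum : (⨆ i : I, ∑' j : I, ENNReal.ofReal |W j i|) < ⊤)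
    (hV0 : ∀ i, V i 0 = {i})
    (hVmono : ∀ i, Monotone (V i))
    (hVunion : ∀ i, (⋃ k, (V i k : Set I)) = {j | j ≠ i ∧ W j i ≠ 0} ∪ {i})
    (hφrange : ∀ i s n, φ i s n ∈ Set.Icc (0:ℝ) 1)
    (hφLip : ∀ i s s' n, |φ i s n - φ i s' n| ≤ γ * |s - s'|)
    (hφδ : ∀ i s n, δ ≤ φ i s n)
    (hG : ∀ n, Gfun g n < ⊤)
    (hξ : ∀ (i : I) (t : ℤ), ∃ s : ℤ, s < t ∧ ξ s i = true)
    (i : I) (t : ℤ) (hit : ξ t i = false)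
    (k : ℕ) (hk : 1 ≤ k) :
    lam φ W g ξ V i t k
      ≤ γ * ∑' j : I, (if j ∈ V i (k-1) then 0 else
          |W j i| * ∑ s ∈ Finset.Icc (lastXi ξ i t) (t-1),
            g j (t - s).toNat * (if ξ s j then 0 else 1)) ∧
    γ * (∑' j : I, (if j ∈ V i (k-1) then 0 else
          |W j i| * ∑ s ∈ Finset.Icc (lastXi ξ i t) (t-1),
            g j (t - s).toNat * (if ξ s j then 0 else 1)))
      ≤ γ * (⨆ j : I, ∑ m ∈ Finset.Icc 1 (t - lastXi ξ i t).toNat, g j m)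
          * ∑' j : I, (if j ∈ V i (k-1) then 0 else |W j i|) :=
  lam_upper_bound_random_environment_general W g V γ φ ξ hgpos hγ hWsum hV0 hVmono hφrange hφLip hG
    hξ i t k hk
end
end

section
/- Uniform approximation of the transition probability by finite-range minorants. Under the assumptions sup_i ∑_j |W_{j→i}| < ∞, uniform Lipschitz continuity of φ with constant γ, and G(n) < ∞ for all n, for every (i,t) with ξ_t(i) = 0, every N ≥ 0, every a ∈ {0,1} and every x ∈ S^ξ: |p_{(i,t)}(a|x) − r_{(i,t)}^{[N]}(a|x)| ≤ γ · (∑_{s=R_t^i}^{t−1} sup_j g_j(t−s)) · ∑_{j∉V_i(N)} |W_{j→i}|, which tends to 0 as N → ∞; consequently, for all a ∈ {0,1} and all x ∈ S^ξ, p_{(i,t)}(a|x) = r_{(i,t)}^{[−1]}(a) + ∑_{k=0}^∞ Δ_{(i,t)}^{[k]}(a|x), where Δ_{(i,t)}^{[k]}(a|x) = r_{(i,t)}^{[k]}(a|x) − r_{(i,t)}^{[k−1]}(a|x) (with r^{[−1]} as defined in the context). -/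
open MeasureTheory Filter Set
open scoped ENNReal

noncomputable section

open NeuronSys
open scoped Topology

/-! For `x ∈ S^ξ` the last spike `L = L_t^i(x) ≥ R_t^i` exists, and it is also the last spike of
every `z` agreeing with `x` on `i` over the window `[L, t-1]`. The potential is then
`∑_j W_{j→i} A_j` with window activities `0 ≤ A_j ≤ C := ∑_{s=R}^{t-1} sup_j g_j(t-s)`, and
`A_j` is unchanged for `j ∈ V_i(N)`; so two such pasts have potentials within
`C ∑_{j∉V_i(N)} |W_{j→i}|`, and the Lipschitz bound on `φ` transfers this to `p`, hence to the
infimum `r^{[N]}`. The tail sums vanish by dominated convergence, and since `r^{[k]}` increases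
in `k` the increments `Δ^{[k]}` are nonnegative and telescope to `p - r^{[-1]}`. -/

theorem summable_of_tsum_ofReal_abs_ne_top {ι : Type*} {f : ι → ℝ}
    (hf : ∑' j, ENNReal.ofReal |f j| ≠ ⊤) : Summable f :=
  summable_abs_iff.1 <| by simpa using ENNReal.summable_toReal hf

section Series

variable {ι : Type*} [DecidableEq ι]

theorem tendsto_tsum_ite_mem_zero {f : ι → ℝ} (hf : Summable f) {V : ℕ → Finset ι}
    (hV : Monotone V) (hcover : ∀ j, f j ≠ 0 → ∃ k, j ∈ V k) :
    Tendsto (fun N => ∑' j, if j ∈ V N then 0 else f j) atTop (𝓝 0) := by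
  have hlim : ∀ j, Tendsto (fun N => if j ∈ V N then 0 else f j) atTop (𝓝 0) := by
    intro j
    by_cases hj : f j = 0
    · simp [hj]
    obtain ⟨k, hk⟩ := hcover j hj
    refine tendsto_const_nhds.congr' (eventually_atTop.2 ⟨k, fun N hN => ?_⟩)
    simp [hV hN hk]
  simpa using tendsto_tsum_of_dominated_convergence (summable_abs_iff.2 hf) hlim
    (Eventually.of_forall fun N j => by split_ifs <;> simp)

theorem abs_tsum_mul_sub_tsum_mul_le {w a b : ι → ℝ} {C : ℝ} (hw : Summable w)
    (ha : ∀ j, a j ∈ Icc 0 C) (hb : ∀ j, b j ∈ Icc 0 C) (V : Finset ι)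
    (hab : ∀ j ∈ V, a j = b j) :
    |∑' j, w j * a j - ∑' j, w j * b j| ≤ C * ∑' j, if j ∈ V then 0 else |w j| := by
  have hw' : Summable fun j => |w j| := summable_abs_iff.2 hw
  have hsum : ∀ c : ι → ℝ, (∀ j, c j ∈ Icc 0 C) → Summable fun j => w j * c j :=
    fun c hc => (hw'.mul_right C).of_norm_bounded fun j => by
      rw [Real.norm_eq_abs, abs_mul, abs_of_nonneg (hc j).1]
      exact mul_le_mul_of_nonneg_left (hc j).2 (abs_nonneg _)
  have htail : Summable fun j => if j ∈ V then 0 else |w j| :=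
    hw'.of_nonneg_of_le (fun j => by split_ifs <;> simp) (fun j => by split_ifs <;> simp)
  rw [← (hsum a ha).tsum_sub (hsum b hb), ← tsum_mul_left, ← Real.norm_eq_abs]
  refine tsum_of_norm_bounded (htail.mul_left C).hasSum fun j => ?_
  rw [Real.norm_eq_abs, ← mul_sub, abs_mul]
  split_ifs with hj
  · simp [hab j hj]
  · rw [mul_comm]
    exact mul_le_mul_of_nonneg_right
      (abs_sub_le_of_nonneg_of_le (ha j).1 (ha j).2 (hb j).1 (hb j).2) (abs_nonneg _)

end Series

theorem hasSum_sub_prev_of_monotone {r : ℕ → ℝ} {r₀ p : ℝ} (hr : Monotone r) (h₀ : r₀ ≤ r 0)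
    (hlim : Tendsto r atTop (𝓝 p)) :
    HasSum (fun k => r k - if k = 0 then r₀ else r (k - 1)) (p - r₀) := by
  set r' : ℕ → ℝ := fun n => if n = 0 then r₀ else r (n - 1)
  have hterm : ∀ k, (r k - if k = 0 then r₀ else r (k - 1)) = r' (k + 1) - r' k := fun k => rfl
  simp only [hterm]
  refine (hasSum_iff_tendsto_nat_of_nonneg (fun k => ?_) _).2 ?_
  · rcases k with _ | k
    · simpa [r'] using h₀
    · simpa [r'] using hr k.le_succ
  · simp only [Finset.sum_range_sub]
    refine (Filter.tendsto_add_atTop_iff_nat 1).1 ?_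
    simpa [r'] using hlim.sub_const r₀

section LastSpike

variable {p q : ℤ → Prop} {t L : ℤ}

theorem isGreatest_sSup_lt {s : ℤ} (hs : s < t) (hp : p s) :
    IsGreatest {u | u < t ∧ p u} (sSup {u | u < t ∧ p u}) :=
  have hbdd : BddAbove {u | u < t ∧ p u} := ⟨t, fun _ hu => hu.1.le⟩
  ⟨Int.csSup_mem ⟨s, hs, hp⟩ hbdd, fun _ hu => le_csSup hbdd hu⟩

theorem lt_and_forall_not_iff (hL : IsGreatest {u | u < t ∧ p u} L) (s : ℤ) :
    (s < t ∧ ∀ u, s < u → u < t → ¬ p u) ↔ L ≤ s ∧ s < t := by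
  constructor
  · rintro ⟨hst, hno⟩
    exact ⟨not_lt.1 fun hsL => hno L hsL hL.1.1 hL.1.2, hst⟩
  · rintro ⟨hLs, hst⟩
    exact ⟨hst, fun u hsu hut hu => (hL.2 ⟨hut, hu⟩).not_gt (hLs.trans_lt hsu)⟩

theorem IsGreatest.of_iff_on_window (hL : IsGreatest {u | u < t ∧ p u} L)
    (hpq : ∀ u, L ≤ u → u < t → (q u ↔ p u)) : IsGreatest {u | u < t ∧ q u} L :=
  ⟨⟨hL.1.1, (hpq L le_rfl hL.1.1).2 hL.1.2⟩, fun u ⟨hut, hu⟩ =>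
    not_lt.1 fun hLu => (hL.2 ⟨hut, (hpq u hLu.le hut).1 hu⟩).not_gt hLu⟩

end LastSpike

namespace NeuronSys

variable {I : Type*}

/-- The constraint in the infimum defining `rk` (which unfolds to it definitionally). -/
def AgreesOnWindow (U : Finset I) (i : I) (t : ℤ) (x z : ℤ → I → Bool) : Prop :=
  ∀ j ∈ U, ∀ s : ℤ, lastSpike x i t ≤ s → s < t → z s j = x s j

def windowActivity (g : I → ℕ → ℝ) (x : ℤ → I → Bool) (L t : ℤ) (j : I) : ℝ :=
  ∑ s ∈ Finset.Icc L (t - 1), if x s j = true then g j (t - s).toNat else 0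

theorem bddAbove_range_of_Gfun_ne_top {g : I → ℕ → ℝ} (hg : ∀ j n, 0 ≤ g j n) {n : ℕ}
    (hn : 1 ≤ n) (hG : Gfun g n ≠ ⊤) : BddAbove (range fun j => g j n) := by
  refine ⟨(Gfun g n).toReal, ?_⟩
  rintro _ ⟨j, rfl⟩
  have hle : ENNReal.ofReal (g j n) ≤ Gfun g n :=
    (Finset.single_le_sum (f := fun m => ENNReal.ofReal (g j m)) (fun _ _ => zero_le)
      (Finset.mem_Icc.2 ⟨hn, le_rfl⟩)).trans
      (le_iSup (fun j => ∑ m ∈ Finset.Icc 1 n, ENNReal.ofReal (g j m)) j)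
  simpa [ENNReal.toReal_ofReal (hg j n)] using ENNReal.toReal_mono hG hle

theorem windowActivity_mem_Icc {g : I → ℕ → ℝ} (hg : ∀ j n, 0 ≤ g j n)
    (hbdd : ∀ n, 1 ≤ n → BddAbove (range fun j => g j n)) (x : ℤ → I → Bool) {R L : ℤ}
    (hRL : R ≤ L) (t : ℤ) (j : I) :
    windowActivity g x L t j ∈ Icc 0 (∑ s ∈ Finset.Icc R (t - 1), ⨆ j, g j (t - s).toNat) := by
  have hsup : ∀ s ∈ Finset.Icc R (t - 1), g j (t - s).toNat ≤ ⨆ j, g j (t - s).toNat :=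
    fun s hs => le_ciSup (hbdd _ (by have := Finset.mem_Icc.1 hs; omega)) j
  refine ⟨Finset.sum_nonneg fun s _ => by split_ifs <;> simp [hg], ?_⟩
  calc windowActivity g x L t j
      ≤ ∑ s ∈ Finset.Icc L (t - 1), g j (t - s).toNat :=
        Finset.sum_le_sum fun s _ => by split_ifs <;> simp [hg]
    _ ≤ ∑ s ∈ Finset.Icc R (t - 1), g j (t - s).toNat :=
        Finset.sum_le_sum_of_subset_of_nonneg (Finset.Icc_subset_Icc_left hRL)
          fun _ _ _ => hg _ _
    _ ≤ ∑ s ∈ Finset.Icc R (t - 1), ⨆ j, g j (t - s).toNat := Finset.sum_le_sum hsup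

theorem pot_eq_tsum_mul_windowActivity (W : I → I → ℝ) (g : I → ℕ → ℝ) {i : I} {t L : ℤ}
    {x : ℤ → I → Bool} (hL : IsGreatest {s | s < t ∧ x s i = true} L) :
    pot W g i t x = ∑' j, W j i * windowActivity g x L t j := by
  have hwin : ∀ s, (s < t ∧ ∀ u, s < u → u < t → x u i = false) ↔ s ∈ Finset.Icc L (t - 1) :=
    fun s => by
      simpa only [Bool.not_eq_true, Finset.mem_Icc, Int.le_sub_one_iff] using
        lt_and_forall_not_iff hL s
  refine tsum_congr fun j => ?_
  rw [windowActivity, Finset.mul_sum, tsum_eq_sum (s := Finset.Icc L (t - 1))]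
  · refine Finset.sum_congr rfl fun s hs => ?_
    obtain ⟨hst, hno⟩ := (hwin s).2 hs
    by_cases hxs : x s j = true
    · rw [if_pos ⟨hst, hno, hxs⟩, if_pos hxs]
    · rw [if_neg fun h => hxs h.2.2, if_neg hxs, mul_zero]
  · intro s hs
    exact if_neg fun h => hs ((hwin s).1 ⟨h.1, h.2.1⟩)

variable {φ : I → ℝ → ℕ → ℝ} {W : I → I → ℝ} {g : I → ℕ → ℝ} {i : I} {t : ℤ}

theorem isGreatest_of_agreesOnWindow {U : Finset I} {x z : ℤ → I → Bool} (hiU : i ∈ U)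
    (hx : IsGreatest {s | s < t ∧ x s i = true} (lastSpike x i t))
    (hxz : AgreesOnWindow U i t x z) :
    IsGreatest {s | s < t ∧ z s i = true} (lastSpike x i t) :=
  hx.of_iff_on_window fun u hLu hut => by rw [hxz i hiU u hLu hut]

theorem abs_pot_sub_le_s8 (hg : ∀ j n, 0 ≤ g j n) (hbdd : ∀ n, 1 ≤ n → BddAbove (range fun j => g j n))
    (hW : Summable fun j => W j i) [DecidableEq I] {U : Finset I} (hiU : i ∈ U) {R : ℤ}
    {x z : ℤ → I → Bool} (hx : IsGreatest {s | s < t ∧ x s i = true} (lastSpike x i t))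
    (hRx : R ≤ lastSpike x i t) (hxz : AgreesOnWindow U i t x z) :
    |pot W g i t x - pot W g i t z| ≤ (∑ s ∈ Finset.Icc R (t - 1), ⨆ j, g j (t - s).toNat) *
      ∑' j, if j ∈ U then 0 else |W j i| := by
  rw [pot_eq_tsum_mul_windowActivity W g hx,
    pot_eq_tsum_mul_windowActivity W g (isGreatest_of_agreesOnWindow hiU hx hxz)]
  refine abs_tsum_mul_sub_tsum_mul_le hW (windowActivity_mem_Icc hg hbdd x hRx t)
    (windowActivity_mem_Icc hg hbdd z hRx t) U fun j hj => ?_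
  refine Finset.sum_congr rfl fun s hs => ?_
  have hs := Finset.mem_Icc.1 hs
  rw [hxz j hj s hs.1 (by omega)]

theorem abs_pcond_sub_pcond (a : Bool) (x z : ℤ → I → Bool) :
    |pcond φ W g i t a x - pcond φ W g i t a z| = |spikeP φ W g i t x - spikeP φ W g i t z| := by
  cases a
  · rw [pcond, pcond, if_neg Bool.false_ne_true, if_neg Bool.false_ne_true, abs_sub_comm]
    ring_nf
  · simp [pcond]

theorem abs_spikeP_sub_le_s8 {γ : ℝ} (hγ : 0 ≤ γ)
    (hφ : ∀ i s s' n, |φ i s n - φ i s' n| ≤ γ * |s - s'|)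
    (hg : ∀ j n, 0 ≤ g j n) (hbdd : ∀ n, 1 ≤ n → BddAbove (range fun j => g j n))
    (hW : Summable fun j => W j i) [DecidableEq I] {U : Finset I} (hiU : i ∈ U) {R : ℤ}
    {x z : ℤ → I → Bool} (hx : IsGreatest {s | s < t ∧ x s i = true} (lastSpike x i t))
    (hRx : R ≤ lastSpike x i t) (hxz : AgreesOnWindow U i t x z) :
    |spikeP φ W g i t x - spikeP φ W g i t z| ≤
      γ * (∑ s ∈ Finset.Icc R (t - 1), ⨆ j, g j (t - s).toNat) *
        ∑' j, if j ∈ U then 0 else |W j i| := by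
  have hLz : lastSpike z i t = lastSpike x i t :=
    (isGreatest_of_agreesOnWindow hiU hx hxz).csSup_eq
  rw [spikeP, spikeP, hLz, mul_assoc]
  exact (hφ _ _ _ _).trans
    (mul_le_mul_of_nonneg_left (abs_pot_sub_le_s8 hg hbdd hW hiU hx hRx hxz) hγ)

variable {ξ : ℤ → I → Bool} {V : I → ℕ → Finset I} {a : Bool} {x : ℤ → I → Bool}

theorem pcond_mem_Icc (hφ : ∀ i s n, φ i s n ∈ Icc (0 : ℝ) 1) (a : Bool) (x : ℤ → I → Bool) :
    pcond φ W g i t a x ∈ Icc 0 1 := by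
  obtain ⟨h0, h1⟩ := hφ i (pot W g i t x) (t - lastSpike x i t).toNat
  cases a <;> simp only [pcond, spikeP, Bool.false_eq_true, if_false, if_true, mem_Icc] <;>
    constructor <;> linarith

theorem abs_pcond_sub_rk_le (hφ : ∀ i s n, φ i s n ∈ Icc (0 : ℝ) 1) (hx : x ∈ Sxi ξ) {k : ℕ}
    {B : ℝ} (hB : ∀ z ∈ Sxi ξ, AgreesOnWindow (V i k) i t x z →
      |pcond φ W g i t a x - pcond φ W g i t a z| ≤ B) :
    |pcond φ W g i t a x - rk φ W g ξ V i t k a x| ≤ B := by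
  have hmem : pcond φ W g i t a x ∈ {v | ∃ z ∈ Sxi ξ,
      AgreesOnWindow (V i k) i t x z ∧ v = pcond φ W g i t a z} :=
    ⟨x, hx, fun _ _ _ _ _ => rfl, rfl⟩
  have hle : rk φ W g ξ V i t k a x ≤ pcond φ W g i t a x :=
    csInf_le ⟨0, by rintro _ ⟨z, -, -, rfl⟩; exact (pcond_mem_Icc hφ a z).1⟩ hmem
  have hge : pcond φ W g i t a x - B ≤ rk φ W g ξ V i t k a x :=
    le_csInf ⟨_, hmem⟩ <| by
      rintro _ ⟨z, hz, hxz, rfl⟩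
      linarith [le_abs_self (pcond φ W g i t a x - pcond φ W g i t a z), hB z hz hxz]
  rw [abs_of_nonneg (sub_nonneg.2 hle)]
  linarith

theorem rk_mono (hφ : ∀ i s n, φ i s n ∈ Icc (0 : ℝ) 1) (hV : Monotone (V i)) (hx : x ∈ Sxi ξ) :
    Monotone fun k => rk φ W g ξ V i t k a x := fun _ _ hkk' =>
  csInf_le_csInf ⟨0, by rintro _ ⟨z, -, -, rfl⟩; exact (pcond_mem_Icc hφ a z).1⟩
    ⟨_, x, hx, fun _ _ _ _ _ => rfl, rfl⟩
    (by rintro _ ⟨z, hz, hxz, rfl⟩; exact ⟨z, hz, fun j hj => hxz j (hV hkk' hj), rfl⟩)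

theorem rneg_le_rk (hφ : ∀ i s n, φ i s n ∈ Icc (0 : ℝ) 1) (hx : x ∈ Sxi ξ) (k : ℕ) :
    rneg φ W g ξ i t a ≤ rk φ W g ξ V i t k a x :=
  csInf_le_csInf ⟨0, by rintro _ ⟨z, -, rfl⟩; exact (pcond_mem_Icc hφ a z).1⟩
    ⟨_, x, hx, fun _ _ _ _ _ => rfl, rfl⟩
    (by rintro _ ⟨z, hz, -, rfl⟩; exact ⟨z, hz, rfl⟩)

theorem abs_pcond_sub_rk_le_tail {γ : ℝ} (hγ : 0 ≤ γ)
    (hφLip : ∀ i s s' n, |φ i s n - φ i s' n| ≤ γ * |s - s'|)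
    (hφ : ∀ i s n, φ i s n ∈ Icc (0 : ℝ) 1) (hg : ∀ j n, 0 ≤ g j n)
    (hbdd : ∀ n, 1 ≤ n → BddAbove (range fun j => g j n)) (hW : Summable fun j => W j i)
    [DecidableEq I] {k : ℕ} (hiV : i ∈ V i k) {R : ℤ}
    (hR : IsGreatest {s | s < t ∧ ξ s i = true} R) (hx : x ∈ Sxi ξ) :
    |pcond φ W g i t a x - rk φ W g ξ V i t k a x| ≤
      γ * (∑ s ∈ Finset.Icc R (t - 1), ⨆ j, g j (t - s).toNat) *
        ∑' j, if j ∈ V i k then 0 else |W j i| :=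
  have hLx : IsGreatest {s | s < t ∧ x s i = true} (lastSpike x i t) :=
    isGreatest_sSup_lt hR.1.1 (hx i _ hR.1.2)
  abs_pcond_sub_rk_le hφ hx fun z _ hxz => (abs_pcond_sub_pcond a x z).trans_le <|
    abs_spikeP_sub_le_s8 hγ hφLip hg hbdd hW hiV hLx (hLx.2 ⟨hR.1.1, hx i _ hR.1.2⟩) hxz

end NeuronSys

theorem finite_range_approximation_general
    {I : Type*} [DecidableEq I]
    (W : I → I → ℝ) (g : I → ℕ → ℝ) (V : I → ℕ → Finset I)
    (γ : ℝ) (φ : I → ℝ → ℕ → ℝ) (ξ : ℤ → I → Bool)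
    (hgpos : ∀ j n, 0 ≤ g j n)
    (hγ : 0 < γ)
    (hWsum : (⨆ i : I, ∑' j : I, ENNReal.ofReal |W j i|) < ⊤)
    (hV0 : ∀ i, V i 0 = {i})
    (hVmono : ∀ i, Monotone (V i))
    (hVunion : ∀ i, (⋃ k, (V i k : Set I)) = {j | j ≠ i ∧ W j i ≠ 0} ∪ {i})
    (hφrange : ∀ i s n, φ i s n ∈ Set.Icc (0:ℝ) 1)
    (hφLip : ∀ i s s' n, |φ i s n - φ i s' n| ≤ γ * |s - s'|)
    (hG : ∀ n, Gfun g n < ⊤)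
    (hξ : ∀ (i : I) (t : ℤ), ∃ s : ℤ, s < t ∧ ξ s i = true)
    (i : I) (t : ℤ) :
    (∀ (N : ℕ) (a : Bool), ∀ x ∈ Sxi ξ,
      |pcond φ W g i t a x - rk φ W g ξ V i t N a x|
        ≤ γ * (∑ s ∈ Finset.Icc (lastXi ξ i t) (t-1), ⨆ j : I, g j (t - s).toNat)
            * ∑' j : I, (if j ∈ V i N then 0 else |W j i|)) ∧
    Filter.Tendsto (fun N : ℕ =>
        γ * (∑ s ∈ Finset.Icc (lastXi ξ i t) (t-1), ⨆ j : I, g j (t - s).toNat)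
          * ∑' j : I, (if j ∈ V i N then 0 else |W j i|))
      Filter.atTop (nhds 0) ∧
    (∀ (a : Bool), ∀ x ∈ Sxi ξ,
      HasSum (fun k : ℕ => rk φ W g ξ V i t k a x -
          (if k = 0 then rneg φ W g ξ i t a else rk φ W g ξ V i t (k-1) a x))
        (pcond φ W g i t a x - rneg φ W g ξ i t a)) := by
  obtain ⟨s₀, hs₀t, hs₀⟩ := hξ i t
  have hR : IsGreatest {s | s < t ∧ ξ s i = true} (lastXi ξ i t) := isGreatest_sSup_lt hs₀t hs₀
  have hW : Summable fun j => W j i := summable_of_tsum_ofReal_abs_ne_top <|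
    ne_top_of_le_ne_top hWsum.ne (le_iSup (fun i => ∑' j, ENNReal.ofReal |W j i|) i)
  have hbdd := fun n hn => bddAbove_range_of_Gfun_ne_top hgpos hn (hG n).ne
  have hiV : ∀ N, i ∈ V i N := fun N => hVmono i N.zero_le (by simp [hV0])
  have hcover : ∀ j, |W j i| ≠ 0 → ∃ k, j ∈ V i k := fun j hj => by
    have : j ∈ ⋃ k, (V i k : Set I) := by
      rw [hVunion i]
      by_cases hji : j = i
      · exact Or.inr hji
      · exact Or.inl ⟨hji, abs_ne_zero.1 hj⟩
    simpa using this
  have hdist := fun N a x (hx : x ∈ Sxi ξ) =>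
    abs_pcond_sub_rk_le_tail (a := a) hγ.le hφLip hφrange hgpos hbdd hW (hiV N) hR hx
  have htail := (tendsto_tsum_ite_mem_zero (summable_abs_iff.2 hW) (hVmono i) hcover).const_mul
    (γ * ∑ s ∈ Finset.Icc (lastXi ξ i t) (t-1), ⨆ j : I, g j (t - s).toNat)
  rw [mul_zero] at htail
  refine ⟨hdist, htail, fun a x hx => hasSum_sub_prev_of_monotone (rk_mono hφrange (hVmono i) hx)
    (rneg_le_rk hφrange hx 0) ?_⟩
  exact tendsto_iff_norm_sub_tendsto_zero.2 <|
    squeeze_zero (fun _ => norm_nonneg _)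
      (fun N => by rw [norm_sub_rev, Real.norm_eq_abs]; exact hdist N a x hx) htail

/-- **Uniform approximation of the transition probability by finite-range minorants.**
`|p_{(i,t)}(a|x) - r^{[N]}_{(i,t)}(a|x)| ≤ γ (∑_{s=R_t^i}^{t-1} sup_j g_j(t-s))
 ∑_{j∉V_i(N)} |W_{j→i}|`, which tends to `0` as `N → ∞`; consequently
`p_{(i,t)}(a|x) = r^{[-1]}(a) + ∑_{k≥0} Δ^{[k]}(a|x)` with
`Δ^{[k]} = r^{[k]} - r^{[k-1]}`. -/
theorem finite_range_approximation
    {I : Type*} [Countable I] [Nonempty I] [DecidableEq I]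
    (W : I → I → ℝ) (g : I → ℕ → ℝ) (V : I → ℕ → Finset I)
    (γ : ℝ) (φ : I → ℝ → ℕ → ℝ) (ξ : ℤ → I → Bool)
    (hWdiag : ∀ j, W j j = 0)
    (hgpos : ∀ j n, 0 ≤ g j n)
    (hγ : 0 < γ)
    (hWsum : (⨆ i : I, ∑' j : I, ENNReal.ofReal |W j i|) < ⊤)
    (hV0 : ∀ i, V i 0 = {i})
    (hVmono : ∀ i, Monotone (V i))
    (hVunion : ∀ i, (⋃ k, (V i k : Set I)) = {j | j ≠ i ∧ W j i ≠ 0} ∪ {i})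
    (hφrange : ∀ i s n, φ i s n ∈ Set.Icc (0:ℝ) 1)
    (hφLip : ∀ i s s' n, |φ i s n - φ i s' n| ≤ γ * |s - s'|)
    (hG : ∀ n, Gfun g n < ⊤)
    (hξ : ∀ (i : I) (t : ℤ), ∃ s : ℤ, s < t ∧ ξ s i = true)
    (i : I) (t : ℤ) (hit : ξ t i = false) :
    (∀ (N : ℕ) (a : Bool), ∀ x ∈ Sxi ξ,
      |pcond φ W g i t a x - rk φ W g ξ V i t N a x|
        ≤ γ * (∑ s ∈ Finset.Icc (lastXi ξ i t) (t-1), ⨆ j : I, g j (t - s).toNat)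
            * ∑' j : I, (if j ∈ V i N then 0 else |W j i|)) ∧
    Filter.Tendsto (fun N : ℕ =>
        γ * (∑ s ∈ Finset.Icc (lastXi ξ i t) (t-1), ⨆ j : I, g j (t - s).toNat)
          * ∑' j : I, (if j ∈ V i N then 0 else |W j i|))
      Filter.atTop (nhds 0) ∧
    (∀ (a : Bool), ∀ x ∈ Sxi ξ,
      HasSum (fun k : ℕ => rk φ W g ξ V i t k a x -
          (if k = 0 then rneg φ W g ξ i t a else rk φ W g ξ V i t (k-1) a x))
        (pcond φ W g i t a x - rneg φ W g ξ i t a)) :=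
  finite_range_approximation_general W g V γ φ ξ hgpos hγ hWsum hV0 hVmono hVunion hφrange hφLip hG
    hξ i t
end
end
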